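/- arXiv:2110.14804 — 5 statements merged into one kernel-verified Lean document; each statement's English description precedes it below -/
import Mathlib

section
/- Let μ and ν be probability measures on a measurable space with μ ≪ ν, and let f : [0,∞) → ℝ be a Borel function for which there exist k₁ ∈ ℝ and k₂ ≥ 0 such that f(r) ≤ k₁ + k₂·r·√(log(1+r)) for all r ≥ 0. Then ∫ f(dμ/dν(θ)) ν(dθ) ≤ k₁ + k₂·√(1 + KL(μ‖ν)), where KL(μ‖ν) = ∫ log(dμ/dν) dμ is the Kullback–Leibler divergence. -/
/-!
Write `g = dμ/dν`. The growth bound and the change of measure `g dν = dμ` reduce the left side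
to `k₁ + k₂ ∫ √(log (1 + g)) dμ`. Jensen's inequality for the concave `√` bounds this by
`k₁ + k₂ √(∫ log (1 + g) dμ)`, and `log (1 + g) ≤ log g + g⁻¹` together with
`∫ g⁻¹ dμ = ν {g > 0} ≤ 1` gives `∫ log (1 + g) dμ ≤ 1 + KL(μ‖ν)`.
-/

open MeasureTheory Real Filter

namespace Real

lemma sqrt_le_one_add_abs (x : ℝ) : √x ≤ 1 + |x| := by
  rcases le_total 0 x with hx | hx
  · nlinarith [sq_sqrt hx, sqrt_nonneg x, sq_nonneg (√x - 1), le_abs_self x]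
  · rw [sqrt_eq_zero_of_nonpos hx]; positivity

lemma log_one_add_le_log_add_inv {x : ℝ} (hx : 0 ≤ x) : log (1 + x) ≤ log x + x⁻¹ := by
  rcases hx.eq_or_lt with rfl | hx
  · simp -- both sides vanish at `0`, since `log 0 = 0⁻¹ = 0`
  have hsplit : 1 + x = x * (1 + x⁻¹) := by field_simp; ring
  rw [hsplit, log_mul hx.ne' (by positivity), add_le_add_iff_left]
  linarith [log_le_sub_one_of_pos (show 0 < 1 + x⁻¹ by positivity)]

end Real

section Sqrt

variable {α : Type*} [MeasurableSpace α] {μ : Measure α} {f : α → ℝ}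

lemma MeasureTheory.Integrable.sqrt [IsFiniteMeasure μ] (hf : Integrable f μ) :
    Integrable (fun a => √(f a)) μ := by
  refine ((integrable_const 1).add hf.abs).mono'
    (continuous_sqrt.comp_aestronglyMeasurable hf.aestronglyMeasurable) ?_
  filter_upwards with a
  rw [norm_eq_abs, abs_of_nonneg (sqrt_nonneg _)]
  exact sqrt_le_one_add_abs (f a)

lemma integral_sqrt_le_sqrt_integral [IsProbabilityMeasure μ] (hf : Integrable f μ)
    (hf₀ : 0 ≤ᵐ[μ] f) : ∫ a, √(f a) ∂μ ≤ √(∫ a, f a ∂μ) :=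
  strictConcaveOn_sqrt.concaveOn.le_map_integral continuous_sqrt.continuousOn
    isClosed_Ici hf₀ hf hf.sqrt

end Sqrt

section RnDeriv

variable {α : Type*} [MeasurableSpace α] {μ ν : Measure α} [IsFiniteMeasure ν]

lemma integrable_rnDeriv_mul_inv :
    Integrable (fun x => (μ.rnDeriv ν x).toReal * (μ.rnDeriv ν x).toReal⁻¹) ν := by
  refine (integrable_const (1 : ℝ)).mono' ?_ (Eventually.of_forall fun x => ?_)
  · exact ((μ.measurable_rnDeriv ν).ennreal_toReal.mul
      (μ.measurable_rnDeriv ν).ennreal_toReal.inv).aestronglyMeasurable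
  · rw [norm_eq_abs, abs_of_nonneg (by positivity)]
    exact mul_inv_le_one

variable [SigmaFinite μ]

lemma integrable_inv_rnDeriv (hμν : μ ≪ ν) :
    Integrable (fun x => (μ.rnDeriv ν x).toReal⁻¹) μ :=
  (integrable_rnDeriv_smul_iff hμν).mp integrable_rnDeriv_mul_inv

lemma integral_inv_rnDeriv_le (hμν : μ ≪ ν) :
    ∫ x, (μ.rnDeriv ν x).toReal⁻¹ ∂μ ≤ ν.real Set.univ := by
  rw [← integral_rnDeriv_smul hμν]
  calc ∫ x, (μ.rnDeriv ν x).toReal * (μ.rnDeriv ν x).toReal⁻¹ ∂ν ≤ ∫ _, (1 : ℝ) ∂ν :=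
        integral_mono integrable_rnDeriv_mul_inv (integrable_const 1) fun _ => mul_inv_le_one
    _ = ν.real Set.univ := by simp

lemma integrable_log_one_add_rnDeriv (hμν : μ ≪ ν)
    (hKL : Integrable (fun x => log (μ.rnDeriv ν x).toReal) μ) :
    Integrable (fun x => log (1 + (μ.rnDeriv ν x).toReal)) μ := by
  refine (hKL.add (integrable_inv_rnDeriv hμν)).mono'
    (measurable_log.comp (measurable_const.add
      (μ.measurable_rnDeriv ν).ennreal_toReal)).aestronglyMeasurable
    (Eventually.of_forall fun x => ?_)
  rw [norm_eq_abs, abs_of_nonneg (log_nonneg (by simp))]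
  exact log_one_add_le_log_add_inv ENNReal.toReal_nonneg

lemma integral_log_one_add_rnDeriv_le (hμν : μ ≪ ν)
    (hKL : Integrable (fun x => log (μ.rnDeriv ν x).toReal) μ) :
    ∫ x, log (1 + (μ.rnDeriv ν x).toReal) ∂μ ≤
      ν.real Set.univ + ∫ x, log (μ.rnDeriv ν x).toReal ∂μ := by
  calc ∫ x, log (1 + (μ.rnDeriv ν x).toReal) ∂μ
      ≤ ∫ x, (log (μ.rnDeriv ν x).toReal + (μ.rnDeriv ν x).toReal⁻¹) ∂μ :=
        integral_mono (integrable_log_one_add_rnDeriv hμν hKL)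
          (hKL.add (integrable_inv_rnDeriv hμν))
          fun x => log_one_add_le_log_add_inv ENNReal.toReal_nonneg
    _ ≤ ν.real Set.univ + ∫ x, log (μ.rnDeriv ν x).toReal ∂μ := by
        rw [integral_add hKL (integrable_inv_rnDeriv hμν)]
        linarith [integral_inv_rnDeriv_le hμν]

end RnDeriv

theorem stmt9_general {Θ : Type*} [MeasurableSpace Θ] (μ ν : Measure Θ)
    [IsProbabilityMeasure μ] [IsProbabilityMeasure ν] (hac : μ ≪ ν)
    (f : ℝ → ℝ) (k₁ k₂ : ℝ) (hk₂ : 0 ≤ k₂)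
    (hgrowth : ∀ r : ℝ, 0 ≤ r → f r ≤ k₁ + k₂ * r * Real.sqrt (Real.log (1 + r)))
    (hfint : Integrable (fun θ => f (μ.rnDeriv ν θ).toReal) ν)
    (hklint : Integrable (fun θ => Real.log (μ.rnDeriv ν θ).toReal) μ) :
    ∫ θ, f (μ.rnDeriv ν θ).toReal ∂ν ≤
      k₁ + k₂ * Real.sqrt (1 + ∫ θ, Real.log (μ.rnDeriv ν θ).toReal ∂μ) := by
  set g : Θ → ℝ := fun θ => (μ.rnDeriv ν θ).toReal
  have hlog := integrable_log_one_add_rnDeriv hac hklint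
  have hweighted : Integrable (fun θ => k₂ * (g θ • √(log (1 + g θ)))) ν :=
    ((integrable_rnDeriv_smul_iff hac).mpr hlog.sqrt).const_mul k₂
  calc ∫ θ, f (g θ) ∂ν
      ≤ ∫ θ, (k₁ + k₂ * (g θ • √(log (1 + g θ)))) ∂ν :=
        integral_mono hfint ((integrable_const k₁).add hweighted) fun θ => by
          simpa only [smul_eq_mul, mul_assoc] using hgrowth (g θ) ENNReal.toReal_nonneg
    _ = k₁ + k₂ * ∫ θ, √(log (1 + g θ)) ∂μ := by
        rw [integral_add (integrable_const k₁) hweighted, integral_const_mul,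
          integral_rnDeriv_smul hac]
        simp
    _ ≤ k₁ + k₂ * √(∫ θ, log (1 + g θ) ∂μ) := by
        gcongr
        exact integral_sqrt_le_sqrt_integral hlog
          (Eventually.of_forall fun θ => log_nonneg (by simp [g]))
    _ ≤ k₁ + k₂ * √(1 + ∫ θ, log (g θ) ∂μ) := by
        gcongr
        simpa using integral_log_one_add_rnDeriv_le hac hklint

/-- if `μ ≪ ν` are probability measures and
`f(r) ≤ k₁ + k₂·r·√(log(1+r))` for all `r ≥ 0`, then
`∫ f(dμ/dν) dν ≤ k₁ + k₂·√(1 + KL(μ‖ν))`, where `KL(μ‖ν) = ∫ log(dμ/dν) dμ`.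
(Both integrals are assumed well defined; when `KL = +∞` the bound is trivial.) -/
theorem stmt9 {Θ : Type*} [MeasurableSpace Θ] (μ ν : Measure Θ)
    [IsProbabilityMeasure μ] [IsProbabilityMeasure ν] (hac : μ ≪ ν)
    (f : ℝ → ℝ) (hf : Measurable f) (k₁ k₂ : ℝ) (hk₂ : 0 ≤ k₂)
    (hgrowth : ∀ r : ℝ, 0 ≤ r → f r ≤ k₁ + k₂ * r * Real.sqrt (Real.log (1 + r)))
    (hfint : Integrable (fun θ => f (μ.rnDeriv ν θ).toReal) ν)
    (hklint : Integrable (fun θ => Real.log (μ.rnDeriv ν θ).toReal) μ) :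
    ∫ θ, f (μ.rnDeriv ν θ).toReal ∂ν ≤
      k₁ + k₂ * Real.sqrt (1 + ∫ θ, Real.log (μ.rnDeriv ν θ).toReal ∂μ) :=
  stmt9_general μ ν hac f k₁ k₂ hk₂ hgrowth hfint hklint
end

section
/- Let Φ̄(x) = P(Z > x) for Z a standard normal random variable. Then for all x > 0: Φ̄(x) ≥ (1/2)·exp(1/π)·exp( −(x + √(2/π))²/2 ). -/
/-!
Write `κ = √(2/π)` and `L(u) = exp(-(κu + u²/2))/2`; the claimed bound is `L(x)`, and
`L(0) = 1/2 = Φ̄(0)`, `L(∞) = 0`, `-L' = (u + κ)L`. The normal density satisfies `φ + L' = L·E`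
with `E(u) = κe^{κu} - (u + κ)`, a convex function vanishing at `0`. If `E(x) ≤ 0` then `E ≤ 0`
on `[0, x]`, so `Φ̄(x) = 1/2 - ∫₀ˣ φ ≥ 1/2 + ∫₀ˣ L' = L(x)`. If `E(x) ≥ 0` then `E ≥ 0` on
`[x, ∞)`, so `Φ̄(x) = ∫ₓ^∞ φ ≥ -∫ₓ^∞ L' = L(x)`.
-/

/-- The complementary cumulative distribution function of the standard normal
distribution: `Φ̄(x) = ∫_x^∞ (2π)^{-1/2} e^{-u²/2} du`. -/
noncomputable def PhiBar (x : ℝ) : ℝ :=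
  ∫ u in Set.Ioi x, Real.exp (-u ^ 2 / 2) / Real.sqrt (2 * Real.pi)

open Real MeasureTheory Set Filter Topology

namespace PhiBar

local notation "κ" => √(2 / π)

noncomputable def density (u : ℝ) : ℝ := exp (-u ^ 2 / 2) / √(2 * π)

noncomputable def lowerBound (u : ℝ) : ℝ := exp (-(κ * u + u ^ 2 / 2)) / 2

noncomputable def excess (u : ℝ) : ℝ := κ * exp (κ * u) - (u + κ)

lemma kappa_pos : 0 < κ := sqrt_pos.2 (by positivity)

lemma sqrt_two_mul_pi : √(2 * π) = 2 / κ := by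
  rw [eq_div_iff kappa_pos.ne', ← sqrt_mul (by positivity),
    show 2 * π * (2 / π) = 2 ^ 2 by field_simp, sqrt_sq zero_le_two]

lemma lowerBound_eq (u : ℝ) :
    1 / 2 * exp (1 / π) * exp (-(u + κ) ^ 2 / 2) = lowerBound u := by
  have hκ : κ ^ 2 = 2 / π := sq_sqrt (by positivity)
  rw [lowerBound, mul_assoc, ← exp_add,
    show 1 / π + -(u + κ) ^ 2 / 2 = -(κ * u + u ^ 2 / 2) by
      linear_combination (-1 / 2 : ℝ) * hκ]
  ring

lemma lowerBound_zero : lowerBound 0 = 1 / 2 := by simp [lowerBound]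

lemma lowerBound_pos (u : ℝ) : 0 < lowerBound u := by unfold lowerBound; positivity

lemma hasDerivAt_neg_lowerBound (u : ℝ) :
    HasDerivAt (fun v ↦ -lowerBound v) ((u + κ) * lowerBound u) u := by
  have h := ((((hasDerivAt_id u).const_mul κ).add
    ((hasDerivAt_pow 2 u).div_const 2)).neg.exp.div_const 2).neg
  refine h.congr_deriv ?_
  simp only [lowerBound, Pi.neg_apply, Pi.add_apply, id]
  ring

lemma tendsto_neg_lowerBound_atTop : Tendsto (fun v ↦ -lowerBound v) atTop (𝓝 0) := by
  have h : Tendsto (fun v : ℝ ↦ κ * v + v ^ 2 / 2) atTop atTop :=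
    (tendsto_id.const_mul_atTop kappa_pos).atTop_add_atTop
      ((tendsto_pow_atTop two_ne_zero).atTop_div_const two_pos)
  have := ((tendsto_exp_atBot.comp (tendsto_neg_atTop_atBot.comp h)).div_const 2).neg
  rwa [zero_div, neg_zero] at this

lemma continuous_add_mul_lowerBound : Continuous fun u ↦ (u + κ) * lowerBound u := by
  unfold lowerBound; fun_prop

lemma excess_zero : excess 0 = 0 := by simp [excess]

lemma density_sub (u : ℝ) :
    density u - (u + κ) * lowerBound u = lowerBound u * excess u := by
  rw [density, lowerBound, excess, sqrt_two_mul_pi,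
    show -(κ * u + u ^ 2 / 2) = -u ^ 2 / 2 - κ * u by ring, exp_sub]
  field_simp

lemma convexOn_excess : ConvexOn ℝ univ excess := by
  refine ⟨convex_univ, fun u _ v _ s t hs ht hst ↦ ?_⟩
  have h := convexOn_exp.2 (mem_univ (κ * u)) (mem_univ (κ * v)) hs ht hst
  simp only [excess, smul_eq_mul] at h ⊢
  rw [show κ * (s * u + t * v) = s * (κ * u) + t * (κ * v) by ring]
  obtain rfl : t = 1 - s := by linarith
  nlinarith [mul_le_mul_of_nonneg_left h kappa_pos.le]

lemma integrable_density : Integrable density := by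
  have h := (integrable_exp_neg_mul_sq one_half_pos).div_const √(2 * π)
  convert h using 2 with u
  rw [density]; ring_nf

lemma PhiBar_zero : PhiBar 0 = 1 / 2 := by
  rw [PhiBar, integral_div]
  simp_rw [show ∀ u : ℝ, -u ^ 2 / 2 = -(1 / 2) * u ^ 2 by intro u; ring]
  rw [integral_gaussian_Ioi, show π / (1 / 2) = 2 * π by ring]
  have : 0 < √(2 * π) := sqrt_pos.2 (by positivity)
  field_simp

lemma density_le_of_excess_nonpos {u : ℝ} (h : excess u ≤ 0) :
    density u ≤ (u + κ) * lowerBound u := by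
  rw [← sub_nonpos, density_sub]
  exact mul_nonpos_of_nonneg_of_nonpos (lowerBound_pos u).le h

lemma le_density_of_excess_nonneg {u : ℝ} (h : 0 ≤ excess u) :
    (u + κ) * lowerBound u ≤ density u := by
  rw [← sub_nonneg, density_sub]
  exact mul_nonneg (lowerBound_pos u).le h

lemma PhiBar_zero_eq_add {x : ℝ} (hx : 0 ≤ x) :
    PhiBar 0 = (∫ u in Ioc 0 x, density u) + PhiBar x := by
  rw [PhiBar, PhiBar, ← Ioc_union_Ioi_eq_Ioi hx]
  exact setIntegral_union (Ioc_disjoint_Ioi le_rfl) measurableSet_Ioi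
    integrable_density.integrableOn integrable_density.integrableOn

lemma lowerBound_le_PhiBar_of_excess_nonpos {x : ℝ} (hx : 0 ≤ x) (hE : excess x ≤ 0) :
    lowerBound x ≤ PhiBar x := by
  have hle : ∀ u ∈ Ioc 0 x, density u ≤ (u + κ) * lowerBound u := by
    intro u hu
    have hseg : u ∈ segment ℝ 0 x := segment_eq_Icc hx ▸ Ioc_subset_Icc_self hu
    refine density_le_of_excess_nonpos ?_
    simpa [excess_zero, hE] using convexOn_excess.le_on_segment (mem_univ 0) (mem_univ x) hseg
  have hFTC : ∫ u in Ioc 0 x, (u + κ) * lowerBound u = 1 / 2 - lowerBound x := by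
    rw [← intervalIntegral.integral_of_le hx, intervalIntegral.integral_eq_sub_of_hasDerivAt
      (fun u _ ↦ hasDerivAt_neg_lowerBound u)
      (continuous_add_mul_lowerBound.intervalIntegrable 0 x), lowerBound_zero]
    ring
  have := setIntegral_mono_on integrable_density.integrableOn
    continuous_add_mul_lowerBound.integrableOn_Ioc measurableSet_Ioc hle
  linarith [PhiBar_zero_eq_add hx, PhiBar_zero]

lemma lowerBound_le_PhiBar_of_excess_nonneg {x : ℝ} (hx : 0 < x) (hE : 0 ≤ excess x) :
    lowerBound x ≤ PhiBar x := by
  have hderiv (u : ℝ) (_ : u ∈ Ici x) := hasDerivAt_neg_lowerBound u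
  have hpos : ∀ u ∈ Ioi x, 0 ≤ (u + κ) * lowerBound u := fun u hu ↦
    mul_nonneg (by linarith [kappa_pos, mem_Ioi.1 hu]) (lowerBound_pos u).le
  have hle : ∀ u ∈ Ioi x, (u + κ) * lowerBound u ≤ density u := fun u hu ↦
    le_density_of_excess_nonneg <| hE.trans <| convexOn_excess.le_right_of_left_le''
      (mem_univ 0) (mem_univ u) hx (mem_Ioi.1 hu).le (by rwa [excess_zero])
  calc lowerBound x = ∫ u in Ioi x, (u + κ) * lowerBound u := by
        rw [integral_Ioi_of_hasDerivAt_of_nonneg' hderiv hpos tendsto_neg_lowerBound_atTop]; ring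
    _ ≤ PhiBar x := setIntegral_mono_on
        (integrableOn_Ioi_deriv_of_nonneg' hderiv hpos tendsto_neg_lowerBound_atTop)
        integrable_density.integrableOn measurableSet_Ioi hle

end PhiBar

open PhiBar in
/-- for all `x > 0`,
`Φ̄(x) ≥ (1/2)·exp(1/π)·exp(−(x + √(2/π))²/2)`. -/
theorem stmt10 (x : ℝ) (hx : 0 < x) :
    1 / 2 * Real.exp (1 / Real.pi) * Real.exp (-(x + Real.sqrt (2 / Real.pi)) ^ 2 / 2) ≤
      PhiBar x := by
  rw [lowerBound_eq]
  rcases le_total (excess x) 0 with hE | hE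
  · exact lowerBound_le_PhiBar_of_excess_nonpos hx.le hE
  · exact lowerBound_le_PhiBar_of_excess_nonneg hx hE
end

section
/- Let Φ̄(x) = P(Z > x) for Z a standard normal random variable, and let Φ̄^{-1} denote its inverse on (0,1). Then for all 0 < y < 1/2: Φ̄^{-1}(y) ≥ √( 2·log(1/y) − 2·log 2 + 2/π ) − √(2/π). -/
/-!
With `a = √(2/π)`, every `x ≥ 0` satisfies `e^{-x²/2 - a x} ≤ 2 Φ̄(x)`; solving this for `x` when
`Φ̄(x) = y < 1/2` gives the claim. The gap `F(x) = Φ̄(x) - ½ e^{-x²/2 - a x}` vanishes at `0` and at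
`∞`, and because `a / 2 = 1/√(2π)` its derivative factors as `½ e^{-x²/2} (G(x) - G(0))` with
`G(x) = (x + a) e^{-a x}`. Since `G` increases up to `(1 - a²)/a` and decreases afterwards, once
`F'` is negative it stays nonpositive, so `F` rises and then falls back to `0`: `F ≥ 0`.
-/

open Real MeasureTheory Set Filter Topology

theorem hasDerivAt_integral_Ioi {E : Type*} [NormedAddCommGroup E] [NormedSpace ℝ E]
    [CompleteSpace E] {f : ℝ → E} (hf : Integrable f) {x : ℝ} (hx : ContinuousAt f x) :
    HasDerivAt (fun t ↦ ∫ u in Ioi t, f u) (-f x) x := by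
  have hsplit : (fun t ↦ ∫ u in Ioi t, f u) = fun t ↦ (∫ u in Ioi 0, f u) - ∫ u in 0..t, f u := by
    funext t
    rw [← intervalIntegral.integral_Ioi_sub_Ioi' hf.integrableOn hf.integrableOn, sub_sub_cancel]
  rw [hsplit]
  exact (intervalIntegral.integral_hasDerivAt_right hf.intervalIntegrable
    hf.aestronglyMeasurable.stronglyMeasurableAtFilter hx).const_sub _

theorem nonneg_of_hasDerivAt_of_neg_imp_nonpos {F F' : ℝ → ℝ} {a x : ℝ}
    (hF : ∀ t, HasDerivAt F (F' t) t) (ha : 0 ≤ F a) (htop : Tendsto F atTop (𝓝 0))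
    (hsign : ∀ ⦃s t⦄, a ≤ s → s ≤ t → F' s < 0 → F' t ≤ 0) (hx : a ≤ x) : 0 ≤ F x := by
  have hcont : Continuous F := continuous_iff_continuousAt.2 fun t ↦ (hF t).continuousAt
  by_cases hneg : ∃ s ∈ Icc a x, F' s < 0
  · obtain ⟨s, hs, hFs⟩ := hneg
    have hanti : AntitoneOn F (Ici x) :=
      antitoneOn_of_hasDerivWithinAt_nonpos (convex_Ici x) hcont.continuousOn
        (fun t _ ↦ (hF t).hasDerivWithinAt)
        (fun t ht ↦ hsign hs.1 (hs.2.trans (interior_subset ht)) hFs)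
    refine le_of_tendsto htop ?_
    filter_upwards [eventually_ge_atTop x] with t ht
    exact hanti self_mem_Ici ht ht
  · push Not at hneg
    have hmono : MonotoneOn F (Icc a x) :=
      monotoneOn_of_hasDerivWithinAt_nonneg (convex_Icc a x) hcont.continuousOn
        (fun t _ ↦ (hF t).hasDerivWithinAt) (fun t ht ↦ hneg t (interior_subset ht))
    exact ha.trans (hmono (left_mem_Icc.2 hx) (right_mem_Icc.2 hx) hx)

theorem le_of_unimodal_of_lt_left {g : ℝ → ℝ} {c a s t : ℝ} (hmono : MonotoneOn g (Iic c))
    (hanti : AntitoneOn g (Ici c)) (has : a ≤ s) (hst : s ≤ t) (hs : g s < g a) :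
    g t ≤ g s := by
  rcases le_or_gt s c with hsc | hcs
  · exact absurd (hmono (has.trans hsc) hsc has) hs.not_ge
  · exact hanti hcs.le (hcs.le.trans hst) hst

theorem hasDerivAt_add_mul_exp_neg_mul (a x : ℝ) :
    HasDerivAt (fun t ↦ (t + a) * exp (-a * t)) ((1 - a * (x + a)) * exp (-a * x)) x := by
  exact (((hasDerivAt_id' x).add_const a).mul ((hasDerivAt_id' x).const_mul (-a)).exp).congr_deriv
    (by ring)

theorem monotoneOn_add_mul_exp_neg_mul {a : ℝ} (ha : 0 < a) :
    MonotoneOn (fun t ↦ (t + a) * exp (-a * t)) (Iic ((1 - a ^ 2) / a)) := by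
  refine monotoneOn_of_hasDerivWithinAt_nonneg (convex_Iic _)
    (fun t _ ↦ (hasDerivAt_add_mul_exp_neg_mul a t).continuousAt.continuousWithinAt)
    (fun t _ ↦ (hasDerivAt_add_mul_exp_neg_mul a t).hasDerivWithinAt) fun t ht ↦ ?_
  rw [interior_Iic, mem_Iio, lt_div_iff₀ ha] at ht
  exact mul_nonneg (by nlinarith) (exp_pos _).le

theorem antitoneOn_add_mul_exp_neg_mul {a : ℝ} (ha : 0 < a) :
    AntitoneOn (fun t ↦ (t + a) * exp (-a * t)) (Ici ((1 - a ^ 2) / a)) := by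
  refine antitoneOn_of_hasDerivWithinAt_nonpos (convex_Ici _)
    (fun t _ ↦ (hasDerivAt_add_mul_exp_neg_mul a t).continuousAt.continuousWithinAt)
    (fun t _ ↦ (hasDerivAt_add_mul_exp_neg_mul a t).hasDerivWithinAt) fun t ht ↦ ?_
  rw [interior_Ici, mem_Ioi, div_lt_iff₀ ha] at ht
  exact mul_nonpos_of_nonpos_of_nonneg (by nlinarith) (exp_pos _).le

theorem integrable_exp_neg_sq_div_two_div_sqrt :
    Integrable fun u : ℝ ↦ exp (-u ^ 2 / 2) / √(2 * π) := by
  convert (integrable_exp_neg_mul_sq (b := 1 / 2) (by norm_num)).div_const (√(2 * π)) using 4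
  ring

theorem PhiBar_zero : PhiBar 0 = 1 / 2 := by
  have h : PhiBar 0 = (∫ u in Ioi (0:ℝ), exp (-(1 / 2) * u ^ 2)) / √(2 * π) := by
    rw [PhiBar, ← integral_div]
    congr 1 with u
    ring_nf
  rw [h, integral_gaussian_Ioi, show π / (1 / 2) = 2 * π by ring]
  have : 0 < √(2 * π) := by positivity
  field_simp

theorem hasDerivAt_PhiBar (x : ℝ) : HasDerivAt PhiBar (-(exp (-x ^ 2 / 2) / √(2 * π))) x :=
  hasDerivAt_integral_Ioi integrable_exp_neg_sq_div_two_div_sqrt (by fun_prop)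

theorem tendsto_PhiBar_atTop : Tendsto PhiBar atTop (𝓝 0) :=
  tendsto_integral_Ioi_zero tendsto_id

theorem antitone_PhiBar : Antitone PhiBar :=
  antitone_of_hasDerivAt_nonpos hasDerivAt_PhiBar fun x ↦ by
    simp only [Pi.zero_apply, Left.neg_nonpos_iff]
    positivity

theorem sqrt_two_div_pi_div_two : √(2 / π) / 2 = (√(2 * π))⁻¹ := by
  rw [← sqrt_inv, show (2 * π)⁻¹ = 2 / π / 2 ^ 2 by field_simp,
    sqrt_div (by positivity : (0 : ℝ) ≤ 2 / π), sqrt_sq zero_le_two]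

theorem hasDerivAt_PhiBar_sub_half_exp (x : ℝ) :
    HasDerivAt (fun t ↦ PhiBar t - exp (-t ^ 2 / 2 - √(2 / π) * t) / 2)
      (exp (-x ^ 2 / 2) / 2 * ((x + √(2 / π)) * exp (-√(2 / π) * x) - √(2 / π))) x := by
  have hexponent : HasDerivAt (fun t ↦ -t ^ 2 / 2 - √(2 / π) * t) (-x - √(2 / π)) x :=
    (((hasDerivAt_pow 2 x).fun_neg.div_const 2).fun_sub
      ((hasDerivAt_id' x).const_mul √(2 / π))).congr_deriv (by ring)
  refine ((hasDerivAt_PhiBar x).fun_sub (hexponent.exp.div_const 2)).congr_deriv ?_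
  rw [div_eq_mul_inv (exp _), ← sqrt_two_div_pi_div_two, sub_eq_add_neg (-x ^ 2 / 2), exp_add,
    neg_mul]
  ring

theorem tendsto_exp_neg_sq_div_two_sub_mul_atTop (a : ℝ) :
    Tendsto (fun t ↦ exp (-t ^ 2 / 2 - a * t)) atTop (𝓝 0) := by
  refine tendsto_exp_atBot.comp (tendsto_atBot_mono' atTop ?_ tendsto_neg_atTop_atBot)
  filter_upwards [eventually_ge_atTop (2 * |a| + 2)] with t ht
  nlinarith [neg_abs_le a, le_abs_self a, abs_nonneg a]

theorem exp_le_two_mul_PhiBar {x : ℝ} (hx : 0 ≤ x) :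
    exp (-x ^ 2 / 2 - √(2 / π) * x) ≤ 2 * PhiBar x := by
  set a := √(2 / π)
  have ha : 0 < a := by positivity
  set G : ℝ → ℝ := fun t ↦ (t + a) * exp (-a * t)
  have hG0 : G 0 = a := by simp [G]
  have hlim : Tendsto (fun t ↦ PhiBar t - exp (-t ^ 2 / 2 - a * t) / 2) atTop (𝓝 0) := by
    simpa using tendsto_PhiBar_atTop.sub ((tendsto_exp_neg_sq_div_two_sub_mul_atTop a).div_const 2)
  have hsign : ∀ ⦃s t⦄, 0 ≤ s → s ≤ t → exp (-s ^ 2 / 2) / 2 * (G s - a) < 0 →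
      exp (-t ^ 2 / 2) / 2 * (G t - a) ≤ 0 := by
    intro s t hs hst hneg
    have hGs : G s < G 0 := by
      rw [hG0, ← sub_neg]; exact neg_of_mul_neg_right hneg (by positivity)
    have hGt := le_of_unimodal_of_lt_left (monotoneOn_add_mul_exp_neg_mul ha)
      (antitoneOn_add_mul_exp_neg_mul ha) hs hst hGs
    exact mul_nonpos_of_nonneg_of_nonpos (by positivity) (by linarith)
  have := nonneg_of_hasDerivAt_of_neg_imp_nonpos hasDerivAt_PhiBar_sub_half_exp
    (by simp [PhiBar_zero]) hlim hsign hx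
  linarith

/-- for all `0 < y < 1/2`,
`Φ̄^{-1}(y) ≥ √(2·log(1/y) − 2·log 2 + 2/π) − √(2/π)`.  Since `Φ̄` is continuous and
strictly decreasing, `Φ̄^{-1}(y)` is the unique `x` with `Φ̄(x) = y`; we phrase the claim
for any such `x`. -/
theorem stmt11 (y : ℝ) (hy : y ∈ Set.Ioo (0 : ℝ) (1 / 2)) (x : ℝ) (hx : PhiBar x = y) :
    Real.sqrt (2 * Real.log (1 / y) - 2 * Real.log 2 + 2 / Real.pi) - Real.sqrt (2 / Real.pi)
      ≤ x := by
  obtain ⟨hy0, hy2⟩ := hy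
  have hx0 : 0 ≤ x := by
    by_contra! hneg
    have := antitone_PhiBar hneg.le
    rw [PhiBar_zero, hx] at this
    linarith
  have hlog : -x ^ 2 / 2 - √(2 / π) * x ≤ log 2 + log y := by
    rw [← log_mul two_ne_zero hy0.ne', le_log_iff_exp_le (by positivity), ← hx]
    exact exp_le_two_mul_PhiBar hx0
  have hsq : 2 * log (1 / y) - 2 * log 2 + 2 / π ≤ (x + √(2 / π)) ^ 2 := by
    rw [one_div, log_inv]
    nlinarith [sq_sqrt (by positivity : (0 : ℝ) ≤ 2 / π)]
  calc √(2 * log (1 / y) - 2 * log 2 + 2 / π) - √(2 / π)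
      ≤ √((x + √(2 / π)) ^ 2) - √(2 / π) := by gcongr
    _ = x := by rw [sqrt_sq (by positivity)]; ring
end

section
/- Let N ≥ 2 and let D be a nonempty convex set of Borel probability measures on [0,1]^N. Let ℓ_1, ℓ_2, … be a semi-adversarial loss sequence constrained by D, and write L_t = Σ_{s=1}^t ℓ_s. Then for every β > 0, every t ∈ ℕ, and every expert i ∈ [N] with Δ_i > 0: E[ exp( β·( min_{j∈[N]} L_t(j) − L_t(i) ) ) ] ≤ exp( t·( β²/2 − β·Δ_i ) ). -/
/-!
Convexity of `D` and a separating hyperplane give a mixture `q` of the experts with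
`∑ j, q j * E_λ[ℓ(i) − ℓ(j)] ≥ Δ_i` for every `λ ∈ D` (a minimax statement). Since
`min_j L_t(j) ≤ ∑ j, q j * L_t(j)`, the exponent is at most `β ∑_s X_s`, where
`X_s = ∑ j, q j * ℓ_s(j) − ℓ_s(i) ∈ [−1, 1]` has conditional mean at most `−Δ_i` under every
`λ ∈ D`. By Hoeffding's lemma each conditional factor `E[exp (β X_s) | ℓ_1, …, ℓ_{s−1}]` is at
most `exp (β²/2 − β Δ_i)`; disintegrating the joint law of `(ℓ_1, …, ℓ_s)` peels these factors
off one at a time.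
-/

open MeasureTheory ProbabilityTheory

/-- A semi-adversarial loss sequence constrained by `D`: random vectors `ℓ_1, ℓ_2, …`
with values in `[0,1]^N` such that for each `t` the conditional distribution of `ℓ_t`
given `(ℓ_1,…,ℓ_{t−1})` lies in `D` almost surely. -/
def IsSemiAdv {Ω : Type*} [MeasurableSpace Ω] (μ : Measure Ω) [IsFiniteMeasure μ]
    {N : ℕ} (D : Set (Measure (Fin N → ℝ))) (ℓ : ℕ → Ω → Fin N → ℝ) : Prop :=
  (∀ t, Measurable (ℓ t)) ∧ (∀ t ω i, ℓ t ω i ∈ Set.Icc (0 : ℝ) 1) ∧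
    ∀ t : ℕ, ∀ᵐ ω ∂μ,
      condDistrib (ℓ (t + 1)) (fun ω' (s : Fin t) => ℓ ((s : ℕ) + 1) ω') μ
        (fun s : Fin t => ℓ ((s : ℕ) + 1) ω) ∈ D

/-- The effective stochastic gap `Δ_i = inf_{λ∈D} max_{j∈[N]} E_{ℓ∼λ}[ℓ(i) − ℓ(j)]`. -/
noncomputable def gap {N : ℕ} (D : Set (Measure (Fin N → ℝ))) (i : Fin N) : ℝ :=
  sInf ((fun lam => sSup (Set.range fun j : Fin N => ∫ v, (v i - v j) ∂lam)) '' D)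

theorem nonneg_of_forall_sum_mul_lt {ι : Type*} [Fintype ι] {w : ι → ℝ} {r u : ℝ}
    (h : ∀ y : ι → ℝ, (∀ k, y k < r) → ∑ k, w k * y k < u) (j : ι) : 0 ≤ w j := by
  classical
  by_contra! hj
  have hc : (r - 1) * ∑ k, w k < u := by
    have := h (fun _ => r - 1) fun _ => by linarith
    rwa [← Finset.sum_mul, mul_comm] at this
  -- moving far enough from the orthant's corner in direction `-e_j` pushes the sum up to `u`
  set M := (u - (r - 1) * ∑ k, w k) / -w j
  have hM : 0 ≤ M := div_nonneg (by linarith) (by linarith)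
  refine (h (fun k => r - 1 - if k = j then M else 0) fun k => by split_ifs <;> linarith).ne ?_
  simp only [mul_sub, mul_ite, mul_zero, Finset.sum_sub_distrib, Finset.sum_ite_eq',
    Finset.mem_univ, if_true, ← Finset.sum_mul, M]
  field_simp [hj.ne]
  ring

theorem exists_mem_stdSimplex_le_sum_mul {ι : Type*} [Fintype ι] [Nonempty ι]
    {C : Set (ι → ℝ)} (hC : Convex ℝ C) {r : ℝ} (h : ∀ x ∈ C, ∃ j, r ≤ x j) :
    ∃ q ∈ stdSimplex ℝ ι, ∀ x ∈ C, r ≤ ∑ j, q j * x j := by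
  classical
  obtain rfl | ⟨x₀, hx₀⟩ := C.eq_empty_or_nonempty
  · obtain ⟨j⟩ := ‹Nonempty ι›
    exact ⟨Pi.single j 1, single_mem_stdSimplex ℝ j, by simp⟩
  -- `q` is the normalised functional separating `C` from the open orthant below `r`
  have hdisj : Disjoint (Set.univ.pi fun _ => Set.Iio r) C :=
    Set.disjoint_right.2 fun x hx hxr => by
      obtain ⟨j, hj⟩ := h x hx
      exact (hxr j (Set.mem_univ j)).not_ge hj
  obtain ⟨f, u, hfr, hfC⟩ := geometric_hahn_banach_open (convex_pi fun _ _ => convex_Iio r)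
    (isOpen_set_pi Set.finite_univ fun _ _ => isOpen_Iio) hC hdisj
  set w : ι → ℝ := fun j => f (Pi.single j 1)
  have hf (x : ι → ℝ) : f x = ∑ j, w j * x j := by
    conv_lhs => rw [← (Pi.basisFun ℝ ι).sum_repr x]
    simp [w, mul_comm]
  have hlt (y : ι → ℝ) (hy : ∀ j, y j < r) : ∑ j, w j * y j < u :=
    hf y ▸ hfr y fun j _ => hy j
  set S := ∑ j, w j
  have hconst {r' : ℝ} (hr' : r' < r) : r' * S < u := by
    have := hlt (fun _ => r') fun _ => hr'
    rwa [← Finset.sum_mul, mul_comm] at this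
  have hw := nonneg_of_forall_sum_mul_lt hlt
  have hS : 0 < S := by
    refine (Finset.sum_nonneg fun j _ => hw j).lt_of_ne fun hS => ?_
    have hw0 := (Finset.sum_eq_zero_iff_of_nonneg fun j _ => hw j).1 hS.symm
    have hu := hfC x₀ hx₀
    simp only [hf, hw0, Finset.mem_univ, zero_mul, Finset.sum_const_zero] at hu
    have h0 := hconst (sub_one_lt r)
    rw [show S = 0 from hS.symm, mul_zero] at h0
    linarith
  refine ⟨fun j => w j / S, ⟨fun j => div_nonneg (hw j) hS.le, ?_⟩, fun x hx => ?_⟩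
  · rw [← Finset.sum_div, div_self hS.ne']
  calc r ≤ u / S := le_of_forall_lt fun r' hr' => (lt_div_iff₀ hS).2 (hconst hr')
    _ ≤ f x / S := by gcongr; exact hfC x hx
    _ = ∑ j, w j / S * x j := by
      rw [hf, Finset.sum_div]
      exact Finset.sum_congr rfl fun j _ => by ring

theorem sInf_range_le_sum_mul {ι : Type*} [Fintype ι] {q : ι → ℝ} (hq : q ∈ stdSimplex ℝ ι)
    (x : ι → ℝ) : sInf (Set.range x) ≤ ∑ j, q j * x j :=
  calc sInf (Set.range x) = ∑ j, q j * sInf (Set.range x) := by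
        rw [← Finset.sum_mul, hq.2, one_mul]
    _ ≤ ∑ j, q j * x j := Finset.sum_le_sum fun j _ =>
        mul_le_mul_of_nonneg_left (csInf_le (Set.finite_range x).bddBelow ⟨j, rfl⟩) (hq.1 j)

theorem sum_Icc_one_eq_sum_fin {M : Type*} [AddCommMonoid M] (u : ℕ → M) (t : ℕ) :
    ∑ s ∈ Finset.Icc 1 t, u s = ∑ s : Fin t, u (s + 1) := by
  rw [Fin.sum_univ_eq_sum_range (fun s => u (s + 1)), Finset.range_eq_Ico,
    Finset.sum_Ico_add' u 0 t 1]
  rfl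

open Real in
theorem integral_exp_mul_le_of_mem_Icc {α : Type*} [MeasurableSpace α] {ν : Measure α}
    [IsProbabilityMeasure ν] {X : α → ℝ} (hX : AEMeasurable X ν) {a b : ℝ}
    (hab : ∀ᵐ x ∂ν, X x ∈ Set.Icc a b) (β : ℝ) :
    ∫ x, exp (β * X x) ∂ν ≤ exp (β * ∫ x, X x ∂ν + ((b - a) / 2) ^ 2 * β ^ 2 / 2) := by
  have hexp : (fun x => exp (β * X x)) =
      fun x => exp (β * ∫ y, X y ∂ν) * exp (β * (X x - ∫ y, X y ∂ν)) := by
    ext x; rw [← exp_add]; ring_nf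
  rw [hexp, integral_const_mul, exp_add]
  refine mul_le_mul_of_nonneg_left
    (((hasSubgaussianMGF_of_mem_Icc hX hab).mgf_le β).trans_eq ?_) (exp_pos _).le
  simp [div_pow, sq_abs]

theorem integrable_prod_comp {Ω ι β : Type*} [MeasurableSpace Ω] [MeasurableSpace β] [Fintype ι]
    {μ : Measure Ω} [IsFiniteMeasure μ] {Y : ι → Ω → β} (hY : ∀ s, Measurable (Y s))
    {g : β → ℝ} (hg : Measurable g) (hg0 : 0 ≤ g) {C : ℝ} (hgC : ∀ y, g y ≤ C) :
    Integrable (fun ω => ∏ s, g (Y s ω)) μ :=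
  .of_bound (Finset.measurable_prod _ fun s _ => hg.comp (hY s)).aestronglyMeasurable
    (C ^ Fintype.card ι) (ae_of_all _ fun ω => by
      rw [Real.norm_of_nonneg (Finset.prod_nonneg fun s _ => hg0 _)]
      exact (Finset.prod_le_prod (fun s _ => hg0 (Y s ω)) fun s _ => hgC (Y s ω)).trans_eq
        (by simp))

theorem integral_mul_le_of_condDistrib_mem {Ω α β : Type*} [MeasurableSpace Ω]
    [MeasurableSpace α] [MeasurableSpace β] [StandardBorelSpace β] [Nonempty β]
    {μ : Measure Ω} [IsFiniteMeasure μ] {X : Ω → α} {Y : Ω → β}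
    (hX : Measurable X) (hY : Measurable Y) {D : Set (Measure β)}
    (hXY : ∀ᵐ ω ∂μ, condDistrib Y X μ (X ω) ∈ D)
    {F : α → ℝ} {g : β → ℝ} (hF : Measurable F) (hg : Measurable g)
    (hF0 : 0 ≤ F) (hg0 : 0 ≤ g) {B C K : ℝ} (hFB : ∀ x, F x ≤ B) (hgC : ∀ y, g y ≤ C)
    (hK : ∀ ν ∈ D, ∫ y, g y ∂ν ≤ K) :
    ∫ ω, F (X ω) * g (Y ω) ∂μ ≤ K * ∫ ω, F (X ω) ∂μ := by
  set κ := condDistrib Y X μ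
  have hFg : Measurable fun p : α × β => F p.1 * g p.2 :=
    (hF.comp measurable_fst).mul (hg.comp measurable_snd)
  have hFg_int : Integrable (fun p : α × β => F p.1 * g p.2) (μ.map X ⊗ₘ κ) :=
    .of_bound hFg.aestronglyMeasurable (B * C) (ae_of_all _ fun p => by
      rw [Real.norm_of_nonneg (mul_nonneg (hF0 _) (hg0 _))]
      exact mul_le_mul (hFB _) (hgC _) (hg0 _) ((hF0 p.1).trans (hFB p.1)))
  have hκg : Measurable fun x => ∫ y, g y ∂κ x :=
    (hg.stronglyMeasurable.comp_measurable measurable_snd).integral_kernel_prod_right'.measurable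
  calc ∫ ω, F (X ω) * g (Y ω) ∂μ
      = ∫ p, F p.1 * g p.2 ∂(μ.map X ⊗ₘ κ) := by
        rw [compProd_map_condDistrib hY.aemeasurable, integral_map (hX.prodMk hY).aemeasurable
          hFg.aestronglyMeasurable]
    _ = ∫ x, F x * ∫ y, g y ∂κ x ∂μ.map X := by
        rw [Measure.integral_compProd hFg_int]
        simp_rw [integral_const_mul]
    _ = ∫ ω, F (X ω) * ∫ y, g y ∂κ (X ω) ∂μ :=
        integral_map hX.aemeasurable (hF.mul hκg).aestronglyMeasurable
    _ ≤ ∫ ω, F (X ω) * K ∂μ := by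
        refine integral_mono_of_nonneg
          (ae_of_all _ fun ω => mul_nonneg (hF0 _) (integral_nonneg hg0)) ?_
          (hXY.mono fun ω hω => mul_le_mul_of_nonneg_left (hK _ hω) (hF0 _))
        exact (Integrable.of_bound (hF.comp hX).aestronglyMeasurable B (ae_of_all _ fun ω => by
          rw [Function.comp_apply, Real.norm_of_nonneg (hF0 _)]; exact hFB _)).mul_const K
    _ = K * ∫ ω, F (X ω) ∂μ := by rw [integral_mul_const, mul_comm]

theorem convex_image_integral {α ι : Type*} [MeasurableSpace α] {D : Set (Measure α)}
    (hD : ∀ μ₁ ∈ D, ∀ μ₂ ∈ D, ∀ a : ENNReal, a ≤ 1 → a • μ₁ + (1 - a) • μ₂ ∈ D)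
    (φ : ι → α → ℝ) (hφ : ∀ μ ∈ D, ∀ j, Integrable (φ j) μ) :
    Convex ℝ ((fun μ j => ∫ x, φ j x ∂μ) '' D) := by
  rintro _ ⟨μ₁, h₁, rfl⟩ _ ⟨μ₂, h₂, rfl⟩ a b ha hb hab
  have hb' : 1 - ENNReal.ofReal a = ENNReal.ofReal b := by
    rw [← ENNReal.ofReal_one, ← ENNReal.ofReal_sub _ ha, ← hab, add_sub_cancel_left]
  refine ⟨_, hD μ₁ h₁ μ₂ h₂ (ENNReal.ofReal a) (ENNReal.ofReal_le_one.2 (by linarith)), ?_⟩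
  funext j
  dsimp only
  rw [hb', integral_add_measure ((hφ μ₁ h₁ j).smul_measure ENNReal.ofReal_ne_top)
    ((hφ μ₂ h₂ j).smul_measure ENNReal.ofReal_ne_top), integral_smul_measure,
    integral_smul_measure, ENNReal.toReal_ofReal ha, ENNReal.toReal_ofReal hb]
  simp

theorem integrable_eval_of_ae_mem_Icc {N : ℕ} {ν : Measure (Fin N → ℝ)} [IsFiniteMeasure ν]
    (hν : ∀ᵐ v ∂ν, ∀ k, v k ∈ Set.Icc (0 : ℝ) 1) (k : Fin N) : Integrable (fun v => v k) ν :=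
  Integrable.of_mem_Icc 0 1 (measurable_pi_apply k).aemeasurable (hν.mono fun _ hv => hv k)

theorem exists_gap_le_integral {N : ℕ} {D : Set (Measure (Fin N → ℝ))} (i : Fin N)
    {ν : Measure (Fin N → ℝ)} (hν : ν ∈ D) : ∃ j, gap D i ≤ ∫ v, (v i - v j) ∂ν := by
  have : Nonempty (Fin N) := ⟨i⟩
  obtain ⟨j, hj⟩ := exists_eq_ciSup_of_finite (f := fun j : Fin N => ∫ v, (v i - v j) ∂ν)
  refine ⟨j, hj ▸ csInf_le ⟨0, ?_⟩ ⟨ν, hν, rfl⟩⟩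
  rintro _ ⟨ν', -, rfl⟩
  exact le_ciSup_of_le (Set.finite_range _).bddAbove i (by simp)

theorem exists_mem_stdSimplex_gap_le_sum {N : ℕ} {D : Set (Measure (Fin N → ℝ))}
    (hDprob : ∀ lam ∈ D, IsProbabilityMeasure lam ∧ ∀ᵐ v ∂lam, ∀ i, v i ∈ Set.Icc (0 : ℝ) 1)
    (hDconv : ∀ lam₁ ∈ D, ∀ lam₂ ∈ D, ∀ a : ENNReal, a ≤ 1 → a • lam₁ + (1 - a) • lam₂ ∈ D)
    (i : Fin N) :
    ∃ q ∈ stdSimplex ℝ (Fin N), ∀ ν ∈ D, gap D i ≤ ∑ j, q j * ∫ v, (v i - v j) ∂ν := by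
  have : Nonempty (Fin N) := ⟨i⟩
  have hint (ν) (hν : ν ∈ D) (j : Fin N) : Integrable (fun v : Fin N → ℝ => v i - v j) ν :=
    have := (hDprob ν hν).1
    (integrable_eval_of_ae_mem_Icc (hDprob ν hν).2 i).sub
      (integrable_eval_of_ae_mem_Icc (hDprob ν hν).2 j)
  obtain ⟨q, hq, hqD⟩ := exists_mem_stdSimplex_le_sum_mul (convex_image_integral hDconv _ hint)
    (r := gap D i) (by rintro _ ⟨ν, hν, rfl⟩; exact exists_gap_le_integral i hν)
  exact ⟨q, hq, fun ν hν => hqD _ ⟨ν, hν, rfl⟩⟩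

theorem integral_prod_le_pow_of_isSemiAdv {Ω : Type*} [MeasurableSpace Ω] {μ : Measure Ω}
    [IsProbabilityMeasure μ] {N : ℕ} {D : Set (Measure (Fin N → ℝ))} {ℓ : ℕ → Ω → Fin N → ℝ}
    (hℓ : IsSemiAdv μ D ℓ) {g : (Fin N → ℝ) → ℝ} (hg : Measurable g) (hg0 : 0 ≤ g) {C K : ℝ}
    (hgC : ∀ y, g y ≤ C) (hK0 : 0 ≤ K) (hK : ∀ ν ∈ D, ∫ y, g y ∂ν ≤ K) (n : ℕ) :
    ∫ ω, ∏ s : Fin n, g (ℓ (s + 1) ω) ∂μ ≤ K ^ n := by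
  induction n with
  | zero => simp
  | succ n ih =>
    have hstep := integral_mul_le_of_condDistrib_mem (measurable_pi_lambda _ fun s => hℓ.1 _)
      (hℓ.1 (n + 1)) (hℓ.2.2 n) (F := fun x : Fin n → Fin N → ℝ => ∏ s, g (x s))
      (Finset.measurable_prod _ fun s _ => hg.comp (measurable_pi_apply s)) hg
      (fun x => Finset.prod_nonneg fun s _ => hg0 _) hg0
      (B := C ^ n) (fun x => (Finset.prod_le_prod (fun s _ => hg0 (x s))
        fun s _ => hgC (x s)).trans_eq (by simp)) hgC hK
    calc ∫ ω, ∏ s : Fin (n + 1), g (ℓ (s + 1) ω) ∂μ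
        = ∫ ω, (∏ s : Fin n, g (ℓ (s + 1) ω)) * g (ℓ (n + 1) ω) ∂μ := by
          simp [Fin.prod_univ_castSucc]
      _ ≤ K * ∫ ω, ∏ s : Fin n, g (ℓ (s + 1) ω) ∂μ := hstep
      _ ≤ K ^ (n + 1) := by rw [pow_succ']; gcongr

section ClippedAdvantage

variable {N : ℕ} {q : Fin N → ℝ} {i : Fin N}

/-- Clipped to `[-1, 1]` so that it is bounded on all of `ℝ^N`; on the cube `[0,1]^N` the
clipping is inactive. -/
def clippedAdvantage (q : Fin N → ℝ) (i : Fin N) (v : Fin N → ℝ) : ℝ :=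
  max (-1) (min 1 (∑ j, q j * v j - v i))

theorem clippedAdvantage_mem_Icc (v : Fin N → ℝ) : clippedAdvantage q i v ∈ Set.Icc (-1) 1 :=
  ⟨le_max_left _ _, max_le (by norm_num) (min_le_left _ _)⟩

theorem measurable_clippedAdvantage : Measurable (clippedAdvantage q i) := by
  unfold clippedAdvantage
  fun_prop

theorem clippedAdvantage_eq (hq : q ∈ stdSimplex ℝ (Fin N)) {v : Fin N → ℝ}
    (hv : ∀ k, v k ∈ Set.Icc (0 : ℝ) 1) : clippedAdvantage q i v = ∑ j, q j * v j - v i := by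
  have hmix : ∑ j, q j * v j ∈ Set.Icc (0 : ℝ) 1 :=
    ⟨Finset.sum_nonneg fun j _ => mul_nonneg (hq.1 j) (hv j).1,
      (Finset.sum_le_sum fun j _ => mul_le_of_le_one_right (hq.1 j) (hv j).2).trans_eq hq.2⟩
  have hvi := hv i
  rw [clippedAdvantage, min_eq_right (by linarith [hmix.2, hvi.1]),
    max_eq_right (by linarith [hmix.1, hvi.2])]

theorem integral_clippedAdvantage (hq : q ∈ stdSimplex ℝ (Fin N)) {ν : Measure (Fin N → ℝ)}
    [IsFiniteMeasure ν] (hν : ∀ᵐ v ∂ν, ∀ k, v k ∈ Set.Icc (0 : ℝ) 1) :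
    ∫ v, clippedAdvantage q i v ∂ν = -∑ j, q j * ∫ v, (v i - v j) ∂ν := by
  have hint := integrable_eval_of_ae_mem_Icc hν
  rw [integral_congr_ae (hν.mono fun v hv => clippedAdvantage_eq hq hv),
    integral_sub (integrable_finsetSum _ fun j _ => (hint j).const_mul _) (hint i),
    integral_finsetSum _ fun j _ => (hint j).const_mul _]
  simp_rw [integral_const_mul, integral_sub (hint i) (hint _), mul_sub, Finset.sum_sub_distrib,
    ← Finset.sum_mul, hq.2, one_mul, neg_sub]

theorem sInf_sub_le_sum_clippedAdvantage (hq : q ∈ stdSimplex ℝ (Fin N)) {ι : Type*}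
    (S : Finset ι) {L : ι → Fin N → ℝ} (hL : ∀ s k, L s k ∈ Set.Icc (0 : ℝ) 1) :
    sInf (Set.range fun j => ∑ s ∈ S, L s j) - ∑ s ∈ S, L s i ≤
      ∑ s ∈ S, clippedAdvantage q i (L s) := by
  calc sInf (Set.range fun j => ∑ s ∈ S, L s j) - ∑ s ∈ S, L s i
      ≤ ∑ j, q j * ∑ s ∈ S, L s j - ∑ s ∈ S, L s i := by
        gcongr; exact sInf_range_le_sum_mul hq _
    _ = ∑ s ∈ S, clippedAdvantage q i (L s) := by
        simp_rw [clippedAdvantage_eq hq (hL _), Finset.sum_sub_distrib, Finset.mul_sum]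
        rw [Finset.sum_comm]

end ClippedAdvantage

theorem stmt14_general {Ω : Type*} [MeasurableSpace Ω] (μ : Measure Ω) [IsProbabilityMeasure μ]
    (N : ℕ) (D : Set (Measure (Fin N → ℝ)))
    (hDprob : ∀ lam ∈ D, IsProbabilityMeasure lam ∧ ∀ᵐ v ∂lam, ∀ i, v i ∈ Set.Icc (0 : ℝ) 1)
    (hDconv : ∀ lam₁ ∈ D, ∀ lam₂ ∈ D, ∀ a : ENNReal, a ≤ 1 →
      a • lam₁ + (1 - a) • lam₂ ∈ D)
    (ℓ : ℕ → Ω → Fin N → ℝ) (hsa : IsSemiAdv μ D ℓ)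
    (β : ℝ) (hβ : 0 < β) (t : ℕ) (i : Fin N) :
    ∫ ω, Real.exp (β * (sInf (Set.range fun j => ∑ s ∈ Finset.Icc 1 t, ℓ s ω j)
        - ∑ s ∈ Finset.Icc 1 t, ℓ s ω i)) ∂μ ≤
      Real.exp ((t : ℝ) * (β ^ 2 / 2 - β * gap D i)) := by
  obtain ⟨q, hq, hqD⟩ := exists_mem_stdSimplex_gap_le_sum hDprob hDconv i
  set g := fun v => Real.exp (β * clippedAdvantage q i v)
  have hg : Measurable g := (measurable_clippedAdvantage.const_mul β).exp
  have hg0 : 0 ≤ g := fun _ => (Real.exp_pos _).le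
  have hgβ (v) : g v ≤ Real.exp β :=
    Real.exp_le_exp.2 (mul_le_of_le_one_right hβ.le (clippedAdvantage_mem_Icc v).2)
  have hK (ν) (hν : ν ∈ D) : ∫ v, g v ∂ν ≤ Real.exp (β ^ 2 / 2 - β * gap D i) := by
    have := (hDprob ν hν).1
    refine (integral_exp_mul_le_of_mem_Icc measurable_clippedAdvantage.aemeasurable
      (ae_of_all _ clippedAdvantage_mem_Icc) β).trans (Real.exp_le_exp.2 ?_)
    rw [integral_clippedAdvantage hq (hDprob ν hν).2]
    linarith [mul_le_mul_of_nonneg_left (hqD ν hν) hβ.le]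
  have hpt (ω) : Real.exp (β * (sInf (Set.range fun j => ∑ s ∈ Finset.Icc 1 t, ℓ s ω j)
      - ∑ s ∈ Finset.Icc 1 t, ℓ s ω i)) ≤ ∏ s : Fin t, g (ℓ (s + 1) ω) := by
    rw [← Real.exp_sum, ← Finset.mul_sum,
      ← sum_Icc_one_eq_sum_fin fun s => clippedAdvantage q i (ℓ s ω)]
    gcongr
    exact sInf_sub_le_sum_clippedAdvantage hq _ fun s => hsa.2.1 s ω
  calc _ ≤ ∫ ω, ∏ s : Fin t, g (ℓ (s + 1) ω) ∂μ :=
        integral_mono_of_nonneg (ae_of_all _ fun _ => (Real.exp_pos _).le)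
          (integrable_prod_comp (fun s => hsa.1 _) hg hg0 hgβ) (ae_of_all _ hpt)
    _ ≤ Real.exp (β ^ 2 / 2 - β * gap D i) ^ t :=
        integral_prod_le_pow_of_isSemiAdv hsa hg hg0 hgβ (Real.exp_pos _).le hK t
    _ = _ := by rw [← Real.exp_nat_mul]

/-- under a semi-adversarial constraint `D`, for every `β > 0`, `t`, and
expert `i` with `Δ_i > 0`:
`E[exp(β·(min_j L_t(j) − L_t(i)))] ≤ exp(t·(β²/2 − β·Δ_i))`. -/
theorem stmt14 {Ω : Type*} [MeasurableSpace Ω] (μ : Measure Ω) [IsProbabilityMeasure μ]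
    (N : ℕ) (hN : 2 ≤ N) (D : Set (Measure (Fin N → ℝ))) (hD : D.Nonempty)
    (hDprob : ∀ lam ∈ D, IsProbabilityMeasure lam ∧ ∀ᵐ v ∂lam, ∀ i, v i ∈ Set.Icc (0 : ℝ) 1)
    (hDconv : ∀ lam₁ ∈ D, ∀ lam₂ ∈ D, ∀ a : ENNReal, a ≤ 1 →
      a • lam₁ + (1 - a) • lam₂ ∈ D)
    (ℓ : ℕ → Ω → Fin N → ℝ) (hsa : IsSemiAdv μ D ℓ)
    (β : ℝ) (hβ : 0 < β) (t : ℕ) (i : Fin N) (hi : 0 < gap D i) :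
    ∫ ω, Real.exp (β * (sInf (Set.range fun j => ∑ s ∈ Finset.Icc 1 t, ℓ s ω j)
        - ∑ s ∈ Finset.Icc 1 t, ℓ s ω i)) ∂μ ≤
      Real.exp ((t : ℝ) * (β ^ 2 / 2 - β * gap D i)) :=
  stmt14_general μ N D hDprob hDconv ℓ hsa β hβ t i
end

section
/- For every p ∈ (0,1) and every x ∈ (0,1]: x·√(2·log(1/x)) ≤ x^p / √(e·(1−p)). -/
/-- For every `p ∈ (0,1)` and every `x ∈ (0,1]`,
`x·√(2·log(1/x)) ≤ x^p / √(e·(1−p))`. -/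
theorem stmt18 (p x : ℝ) (hp : p ∈ Set.Ioo (0 : ℝ) 1) (hx : x ∈ Set.Ioc (0 : ℝ) 1) :
    x * Real.sqrt (2 * Real.log (1 / x)) ≤ x ^ p / Real.sqrt (Real.exp 1 * (1 - p)) := by
  obtain ⟨hp0, hp1⟩ := hp
  obtain ⟨hx0, hx1⟩ := hx
  have h1p : (0:ℝ) < 1 - p := by linarith
  have he : (0:ℝ) < Real.exp 1 * (1 - p) := by positivity
  set t := Real.log (1 / x) with ht
  have hlx : Real.log x = -t := by
    rw [ht, one_div, Real.log_inv]; ring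
  have htn : 0 ≤ t := by
    rw [ht]
    exact Real.log_nonneg (by rw [le_div_iff₀ hx0]; linarith)
  have hx2 : x ^ 2 = Real.exp (-(2*t)) := by
    have : x = Real.exp (-t) := by rw [← hlx, Real.exp_log hx0]
    rw [this, ← Real.exp_nat_mul]; ring_nf
  have hxp : x ^ p = Real.exp (-(p*t)) := by
    rw [Real.rpow_def_of_pos hx0, hlx]; ring_nf
  set s := 2 * (1 - p) * t with hs
  have hkey : s * Real.exp 1 ≤ Real.exp s := by
    have h1 := Real.add_one_le_exp (s - 1)
    have h2 : s ≤ Real.exp (s - 1) := by linarith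
    have h3 := mul_le_mul_of_nonneg_right h2 (Real.exp_pos 1).le
    calc s * Real.exp 1 ≤ Real.exp (s - 1) * Real.exp 1 := h3
      _ = Real.exp s := by rw [← Real.exp_add]; ring_nf
  -- squared inequality
  have hsq : x ^ 2 * (2 * t) ≤ (x ^ p) ^ 2 / (Real.exp 1 * (1 - p)) := by
    rw [hx2, hxp, ← Real.exp_nat_mul, le_div_iff₀ he]
    have h4 := mul_le_mul_of_nonneg_right hkey (Real.exp_pos (-(2*t))).le
    have h5 : Real.exp s * Real.exp (-(2*t)) = Real.exp (-((2:ℕ) * (p*t))) := by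
      rw [← Real.exp_add]; congr 1; rw [hs]; push_cast; ring
    rw [h5] at h4
    calc Real.exp (-(2*t)) * (2*t) * (Real.exp 1 * (1-p))
        = s * Real.exp 1 * Real.exp (-(2*t)) := by rw [hs]; ring
      _ ≤ Real.exp (-((2:ℕ) * (p*t))) := h4
      _ = Real.exp ((2:ℕ) * -(p*t)) := by congr 1; push_cast; ring
  -- take square roots
  have hL : x * Real.sqrt (2 * t) = Real.sqrt (x ^ 2 * (2 * t)) := by
    rw [Real.sqrt_mul (sq_nonneg x) (2 * t), Real.sqrt_sq hx0.le]
  rw [hL]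
  calc Real.sqrt (x ^ 2 * (2 * t)) ≤ Real.sqrt ((x ^ p) ^ 2 / (Real.exp 1 * (1 - p))) :=
        Real.sqrt_le_sqrt hsq
    _ = x ^ p / Real.sqrt (Real.exp 1 * (1 - p)) := by
        rw [Real.sqrt_div (sq_nonneg _), Real.sqrt_sq (Real.rpow_nonneg hx0.le p)]
end
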